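/- arXiv:math/0105220 — 5 statements merged into one kernel-verified Lean document; each statement's English description precedes it below -/
import Mathlib

section
/- Let h ∈ ℂ. In Mat₃(ℂ), set T = I + hE₁₃, F₁ = E₂₁ − (h/2)E₂₃, F₂ = −(h/2)E₁₂ + E₃₂. Then (TF₁)²(TF₂) − 2(TF₁)(TF₂)(TF₁) + (TF₂)(TF₁)² = 0 and (TF₂)²(TF₁) − 2(TF₂)(TF₁)(TF₂) + (TF₁)(TF₂)² = 0. -/
/-! Since `E₁₃ F₁ = 0`, the twist fixes `F₁`, while `T F₂ = (h/2) E₁₂ + E₃₂`. The twisted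
generators `a = T F₁`, `b = T F₂` then satisfy `a² = b² = ab = 0`, so every monomial of both
Serre relations vanishes on its own. (`single i j 1` with `i j : Fin 3` is `E_{i+1,j+1}`.) -/

open Matrix

theorem serre_relations_of_mul_eq_zero {R A : Type*} [NonUnitalRing A] [SMulZeroClass R A]
    {a b : A} (c : R) (ha : a * a = 0) (hb : b * b = 0) (hab : a * b = 0) :
    a * a * b - c • (a * b * a) + b * (a * a) = 0 ∧
      b * b * a - c • (b * a * b) + a * (b * b) = 0 := by
  simp [ha, hb, hab, mul_assoc]

section FundamentalRepresentation

variable {α : Type*} [CommRing α] (c d h : α)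

theorem one_add_smul_single_mul_lowering₁ :
    (1 + h • single 0 2 1 : Matrix (Fin 3) (Fin 3) α) * (single 1 0 1 - c • single 1 2 1) =
      single 1 0 1 - c • single 1 2 1 := by
  simp [add_mul, mul_sub, single_mul_single_of_ne]

theorem one_add_smul_single_mul_lowering₂ :
    (1 + h • single 0 2 1 : Matrix (Fin 3) (Fin 3) α) * (-(c • single 0 1 1) + single 2 1 1) =
      (h - c) • single 0 1 1 + single 2 1 1 := by
  simp only [add_mul, mul_add, one_mul, mul_neg, Matrix.smul_mul, Matrix.mul_smul,
    single_mul_single_same, single_mul_single_of_ne, ne_eq, Fin.reduceEq, not_false_eq_true,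
    smul_zero, add_zero, mul_one]
  module

theorem lowering₁_mul_self :
    (single 1 0 1 - c • single 1 2 1 : Matrix (Fin 3) (Fin 3) α) *
      (single 1 0 1 - c • single 1 2 1) = 0 := by
  simp [sub_mul, mul_sub, single_mul_single_of_ne]

theorem lowering₂_mul_self :
    (d • single 0 1 1 + single 2 1 1 : Matrix (Fin 3) (Fin 3) α) *
      (d • single 0 1 1 + single 2 1 1) = 0 := by
  simp [add_mul, mul_add, single_mul_single_of_ne]

theorem lowering₁_mul_lowering₂ :
    (single 1 0 1 - c • single 1 2 1 : Matrix (Fin 3) (Fin 3) α) *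
      (c • single 0 1 1 + single 2 1 1) = 0 := by
  simp [sub_mul, mul_add, single_mul_single_of_ne, single_mul_single_same]

end FundamentalRepresentation

theorem stmt_8 (h : ℂ)
    (T F₁ F₂ : Matrix (Fin 3) (Fin 3) ℂ)
    (hT : T = 1 + h • single 0 2 1)
    (hF₁ : F₁ = single 1 0 1 - (h / 2) • single 1 2 1)
    (hF₂ : F₂ = -((h / 2) • single 0 1 1) + single 2 1 1) :
    (T * F₁) * (T * F₁) * (T * F₂) - (2 : ℂ) • ((T * F₁) * (T * F₂) * (T * F₁))
        + (T * F₂) * ((T * F₁) * (T * F₁)) = 0 ∧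
      (T * F₂) * (T * F₂) * (T * F₁) - (2 : ℂ) • ((T * F₂) * (T * F₁) * (T * F₂))
        + (T * F₁) * ((T * F₂) * (T * F₂)) = 0 := by
  have hTF₁ : T * F₁ = single 1 0 1 - (h / 2) • single 1 2 1 := by
    rw [hT, hF₁, one_add_smul_single_mul_lowering₁]
  have hTF₂ : T * F₂ = (h / 2) • single 0 1 1 + single 2 1 1 := by
    rw [hT, hF₂, one_add_smul_single_mul_lowering₂, sub_half]
  rw [hTF₁, hTF₂]
  exact serre_relations_of_mul_eq_zero 2 (lowering₁_mul_self _) (lowering₂_mul_self _)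
    (lowering₁_mul_lowering₂ _)
end

section
/- Let h ∈ ℂ, h ≠ 0 not required. In Mat₃(ℂ), set T = I + hE₁₃, T⁻ = I − hE₁₃, H₃ = E₁₁ − E₃₃, F₁ = E₂₁ − (h/2)E₂₃, F₂ = −(h/2)E₁₂ + E₃₂, F₃ = E₃₁. Then [TF₂, TF₁] = T·(F₃ − (h/2)H₃TH₃ − (h/8)(T − T⁻)). -/
/-!
Everything is a linear combination of matrix units, multiplied by `Eᵢⱼ Eₖₗ = δⱼₖ Eᵢₗ`.
The twist `T = 1 + h E₁₃` fixes `F₁` and turns `F₂` into `(h/2) E₁₂ + E₃₂`, so the left side is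
`E₃₁ + (h/2)(E₁₁ - E₃₃) - (h²/4) E₁₃`. On the right, `H₃ T H₃ = E₁₁ + E₃₃ - h E₁₃` and
`T - T⁻ = 2h E₁₃`, and multiplying out by `T` gives the same matrix.
-/

open Matrix

namespace JordanianSl3

variable {K : Type*} [Field K]

theorem twist_mul_F₁ (h : K) :
    (1 + h • single 0 2 1 : Matrix (Fin 3) (Fin 3) K) * (single 1 0 1 - (h / 2) • single 1 2 1) =
      single 1 0 1 - (h / 2) • single 1 2 1 := by
  simp only [add_mul, mul_sub, one_mul, smul_mul_assoc, mul_smul_comm, single_mul_single_of_ne,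
    ne_eq, Fin.reduceEq, not_false_eq_true, smul_zero, add_zero]

theorem twist_mul_F₂ [CharZero K] (h : K) :
    (1 + h • single 0 2 1 : Matrix (Fin 3) (Fin 3) K) * (-((h / 2) • single 0 1 1) + single 2 1 1) =
      (h / 2) • single 0 1 1 + single 2 1 1 := by
  simp only [add_mul, mul_add, one_mul, mul_neg, smul_mul_assoc, mul_smul_comm,
    single_mul_single_same, single_mul_single_of_ne, ne_eq, Fin.reduceEq, not_false_eq_true,
    smul_zero, mul_one]
  module

theorem commutator_twisted_F₂_F₁ [CharZero K] (h : K) :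
    ((h / 2) • single 0 1 1 + single 2 1 1 : Matrix (Fin 3) (Fin 3) K) *
          (single 1 0 1 - (h / 2) • single 1 2 1) -
        (single 1 0 1 - (h / 2) • single 1 2 1) * ((h / 2) • single 0 1 1 + single 2 1 1) =
      single 2 0 1 + (h / 2) • (single 0 0 1 - single 2 2 1) - (h ^ 2 / 4) • single 0 2 1 := by
  simp only [add_mul, mul_add, sub_mul, mul_sub, smul_mul_assoc, mul_smul_comm,
    single_mul_single_same, single_mul_single_of_ne, ne_eq, Fin.reduceEq, not_false_eq_true,
    smul_zero, mul_one]
  module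

theorem H₃_mul_twist_mul_H₃ (h : K) :
    (single 0 0 1 - single 2 2 1 : Matrix (Fin 3) (Fin 3) K) * (1 + h • single 0 2 1) *
        (single 0 0 1 - single 2 2 1) =
      single 0 0 1 + single 2 2 1 - h • single 0 2 1 := by
  simp only [add_mul, mul_add, sub_mul, mul_sub, mul_one, smul_mul_assoc, mul_smul_comm,
    single_mul_single_same, single_mul_single_of_ne, ne_eq, Fin.reduceEq, not_false_eq_true,
    zero_mul]
  module

end JordanianSl3

theorem stmt_9 (h : ℂ)
    (T T' H₃ F₁ F₂ F₃ : Matrix (Fin 3) (Fin 3) ℂ)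
    (hT : T = 1 + h • single 0 2 1)
    (hT' : T' = 1 - h • single 0 2 1)
    (hH₃ : H₃ = single 0 0 1 - single 2 2 1)
    (hF₁ : F₁ = single 1 0 1 - (h / 2) • single 1 2 1)
    (hF₂ : F₂ = -((h / 2) • single 0 1 1) + single 2 1 1)
    (hF₃ : F₃ = single 2 0 1) :
    (T * F₂) * (T * F₁) - (T * F₁) * (T * F₂) =
      T * (F₃ - (h / 2) • (H₃ * T * H₃) - (h / 8) • (T - T')) := by
  subst hT hT' hH₃ hF₁ hF₂ hF₃
  rw [JordanianSl3.twist_mul_F₁, JordanianSl3.twist_mul_F₂,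
    JordanianSl3.commutator_twisted_F₂_F₁, JordanianSl3.H₃_mul_twist_mul_H₃]
  simp only [add_mul, mul_add, mul_sub, one_mul, smul_mul_assoc, mul_smul_comm,
    single_mul_single_same, single_mul_single_of_ne, ne_eq, Fin.reduceEq, not_false_eq_true,
    smul_zero, mul_one]
  module
end

section
/- Let h ∈ ℂ. In Mat₃(ℂ), set H₃' = −(E₁₁ − E₃₃), T' = −(I + hE₁₃), and F₃' = −E₃₁. Then [H₃', T'] = (T')² − I, [T', F₃'] = (h/2)(H₃'T' + T'H₃'), and [H₃', F₃'] = −(1/2)(T'F₃' + F₃'T' + (T')⁻¹F₃' + F₃'(T')⁻¹), where (T')⁻¹ = −(I − hE₁₃). -/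
/-!
The matrices `D = E₁₁ - E₃₃`, `E = E₁₃`, `F = E₃₁` form an `sl₂`-triple with `E² = 0` and
`DE + ED = 0`. For any such triple put `T = 1 + hE`, `T⁻¹ = 1 - hE`: then
`[D, T] = h[D, E] = 2hE = T² - 1`, `[T, F] = h[E, F] = hD = (h/2)(DT + TD)` because `D`
anticommutes with `E`, and `T + T⁻¹ = 2` gives the third relation from `[D, F] = -2F`.
Every term of the relations is a scalar or a product of two generators, so they survive
`(H, T, T⁻¹, F) ↦ (-H, -T, -T⁻¹, -F)`, which turns this representation into the one at hand.
-/

open Matrix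

attribute [local instance] LieRing.ofAssociativeRing

/-- Ohn's relations of the Jordanian algebra `U_h(sl(2))`, with `Tinv` in the role of `T⁻¹`. -/
def OhnRelations {K A : Type*} [DivisionRing K] [Ring A] [Module K A] (h : K)
    (H T Tinv F : A) : Prop :=
  H * T - T * H = T * T - 1 ∧
    T * F - F * T = (h / 2) • (H * T + T * H) ∧
    H * F - F * H = -((1 / 2 : K) • (T * F + F * T + Tinv * F + F * Tinv))

theorem OhnRelations.neg {K A : Type*} [DivisionRing K] [Ring A] [Module K A] {h : K}
    {H T Tinv F : A} (hR : OhnRelations h H T Tinv F) :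
    OhnRelations h (-H) (-T) (-Tinv) (-F) := by
  simpa only [OhnRelations, neg_mul_neg] using hR

theorem IsSl2Triple.ohnRelations {K A : Type*} [Field K] [NeZero (2 : K)] [Ring A]
    [Algebra K A] {D E F : A} (ht : IsSl2Triple D E F) (hEE : E * E = 0)
    (hDE : D * E + E * D = 0) (h : K) :
    OhnRelations h D (1 + h • E) (1 - h • E) F := by
  have hEF : E * F - F * E = D := ht.lie_e_f
  have hDE' : D * E - E * D = 2 • E := ht.lie_h_e_nsmul
  have hDF : D * F - F * D = -(2 • F) := ht.lie_h_f_nsmul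
  refine ⟨?_, ?_, ?_⟩
  · calc D * (1 + h • E) - (1 + h • E) * D = h • (D * E - E * D) := by
          simp only [mul_add, add_mul, mul_one, one_mul, mul_smul_comm, smul_mul_assoc]; module
      _ = (1 + h • E) * (1 + h • E) - 1 := by
          simp only [hDE', mul_add, add_mul, mul_one, one_mul, mul_smul_comm, smul_mul_assoc, hEE]
          module
  · calc (1 + h • E) * F - F * (1 + h • E) = h • (E * F - F * E) := by
          simp only [mul_add, add_mul, mul_one, one_mul, mul_smul_comm, smul_mul_assoc]; module
      _ = (h / 2) • ((2 : K) • D) := by rw [hEF, smul_smul, div_mul_cancel₀ h two_ne_zero]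
      _ = (h / 2) • ((2 : K) • D + h • (D * E + E * D)) := by rw [hDE, smul_zero, add_zero]
      _ = (h / 2) • (D * (1 + h • E) + (1 + h • E) * D) := by
          simp only [mul_add, add_mul, mul_one, one_mul, mul_smul_comm, smul_mul_assoc]; module
  · calc D * F - F * D = -(2 • F) := hDF
      _ = -((1 / 2 : K) • ((2 : K) • (2 • F))) := by rw [one_div, inv_smul_smul₀ two_ne_zero]
      _ = -((1 / 2 : K) •
            ((1 + h • E) * F + F * (1 + h • E) + (1 - h • E) * F + F * (1 - h • E))) := by
          simp only [mul_add, add_mul, mul_sub, sub_mul, mul_one, one_mul, mul_smul_comm,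
            smul_mul_assoc]
          module

namespace Matrix

variable {n : Type*} [Fintype n] [DecidableEq n] {i k : n}

theorem isSl2Triple_single {R : Type*} [Ring R] [Nontrivial R] (hik : i ≠ k) :
    IsSl2Triple (single i i (1 : R) - single k k 1) (single i k 1) (single k i 1) where
  h_ne_zero hD := by simpa [single_apply, hik.symm] using congr_fun₂ hD i i
  lie_e_f := by simp [Ring.lie_def, single_mul_single_same]
  lie_h_e_nsmul := by
    simp [Ring.lie_def, sub_mul, mul_sub, single_mul_single_same, single_mul_single_of_ne,
      hik.symm]
    rw [← one_add_one_eq_two, single_add]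
  lie_h_f_nsmul := by
    simp [Ring.lie_def, sub_mul, mul_sub, single_mul_single_same, single_mul_single_of_ne, hik]
    rw [← one_add_one_eq_two, single_add]
    abel

theorem ohnRelations_single {K : Type*} [Field K] [NeZero (2 : K)] (h : K) (hik : i ≠ k) :
    OhnRelations h (single i i (1 : K) - single k k 1) (1 + h • single i k 1)
      (1 - h • single i k 1) (single k i 1) :=
  (isSl2Triple_single hik).ohnRelations (single_mul_single_of_ne _ _ _ _ hik.symm _)
    (by simp [sub_mul, mul_sub, single_mul_single_same, single_mul_single_of_ne, hik.symm]) h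

end Matrix

theorem stmt_13 (h : ℂ)
    (H₃' T' Tinv F₃' : Matrix (Fin 3) (Fin 3) ℂ)
    (hH₃' : H₃' = -(Matrix.single 0 0 1 - Matrix.single 2 2 1))
    (hT' : T' = -(1 + h • Matrix.single 0 2 1))
    (hTinv : Tinv = -(1 - h • Matrix.single 0 2 1))
    (hF₃' : F₃' = -(Matrix.single 2 0 1)) :
    H₃' * T' - T' * H₃' = T' * T' - 1 ∧
      T' * F₃' - F₃' * T' = (h / 2) • (H₃' * T' + T' * H₃') ∧
      H₃' * F₃' - F₃' * H₃' =
        -((1 / 2 : ℂ) • (T' * F₃' + F₃' * T' + Tinv * F₃' + F₃' * Tinv)) := by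
  subst hH₃' hT' hTinv hF₃'
  exact (ohnRelations_single h (by decide : (0 : Fin 3) ≠ 2)).neg
end

section
/- Let h ∈ ℂ. Define R ∈ Mat₃(ℂ) ⊗ Mat₃(ℂ) (equivalently a 9×9 matrix) by R = E₁₁⊗T + E₂₂⊗I + E₃₃⊗T⁻ + E₁₂⊗(2h·e₂) + E₂₃⊗(−2h·e₁) + E₁₃⊗(−h·h₃ + h²·e₃), where T = I + h·e₃, T⁻ = I − h·e₃, e₁ = E₁₂, e₂ = E₂₃, e₃ = E₁₃, h₃ = E₁₁ − E₃₃. Then R satisfies the triangularity condition R₂₁·R = I⊗I, where R₂₁ = P·R·P and P is the flip operator P(v⊗w) = w⊗v on ℂ³⊗ℂ³. -/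
/-!
Write `a ∧ b = a ⊗ b - b ⊗ a` and let `r = h₃ ∧ e₃ + 2 e₁ ∧ e₂` (the classical Jordanian
`r`-matrix). In the fundamental representation `r² = 2 e₃ ⊗ e₃` and `(e₃ ⊗ e₃) r = 0`, so
`r³ = 0` and `R = 1 + h r + h² e₃ ⊗ e₃ = exp (h r)`. Conjugation by the flip `P` is an
algebra automorphism sending `r` to `-r`, hence `R₂₁ = exp (-h r)` and `R₂₁ R = 1`.
-/

open Matrix Kronecker

namespace Matrix

variable {l m n p K : Type*}

def flipMatrix (n K : Type*) [DecidableEq n] [Zero K] [One K] : Matrix (n × n) (n × n) K :=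
  of fun p q => if p.1 = q.2 ∧ p.2 = q.1 then 1 else 0

theorem flipMatrix_eq_toMatrix [DecidableEq n] [Zero K] [One K] :
    flipMatrix n K = (Equiv.prodComm n n).toPEquiv.toMatrix := by
  ext ⟨a, b⟩ ⟨c, d⟩
  simp [flipMatrix, PEquiv.toMatrix_apply, Prod.ext_iff, eq_comm, and_comm]

theorem flipMatrix_mul_mul_flipMatrix [Fintype n] [DecidableEq n] [CommSemiring K]
    (M : Matrix (n × n) (n × n) K) :
    flipMatrix n K * M * flipMatrix n K = reindexAlgEquiv K K (Equiv.prodComm n n) M := by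
  rw [flipMatrix_eq_toMatrix, PEquiv.toMatrix_toPEquiv_mul, PEquiv.mul_toMatrix_toPEquiv,
    submatrix_submatrix]
  rfl

theorem reindex_prodComm_kronecker [CommMagma K] (A : Matrix l m K) (B : Matrix n p K) :
    reindex (Equiv.prodComm l n) (Equiv.prodComm m p) (A ⊗ₖ B) = B ⊗ₖ A := by
  ext ⟨i, j⟩ ⟨k, q⟩
  exact mul_comm _ _

theorem sub_kronecker [Ring K] (A₁ A₂ : Matrix l m K) (B : Matrix n p K) :
    (A₁ - A₂) ⊗ₖ B = A₁ ⊗ₖ B - A₂ ⊗ₖ B := by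
  ext; simp [sub_mul]

theorem kronecker_sub [Ring K] (A : Matrix l m K) (B₁ B₂ : Matrix n p K) :
    A ⊗ₖ (B₁ - B₂) = A ⊗ₖ B₁ - A ⊗ₖ B₂ := by
  ext; simp [mul_sub]

theorem kronecker_neg [Ring K] (A : Matrix l m K) (B : Matrix n p K) :
    A ⊗ₖ (-B) = -(A ⊗ₖ B) := by
  ext; simp

def wedge [Mul K] [Sub K] (A B : Matrix m m K) : Matrix (m × m) (m × m) K := A ⊗ₖ B - B ⊗ₖ A

theorem reindexAlgEquiv_prodComm_wedge [Fintype m] [DecidableEq m] [CommRing K]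
    (A B : Matrix m m K) :
    reindexAlgEquiv K K (Equiv.prodComm m m) (wedge A B) = -wedge A B := by
  simp only [wedge, map_sub, coe_reindexAlgEquiv, reindex_prodComm_kronecker, neg_sub]

end Matrix

namespace Jordanian

variable {K : Type*} [CommRing K]

def classicalR : Matrix (Fin 3 × Fin 3) (Fin 3 × Fin 3) K :=
  wedge (single 0 0 1 - single 2 2 1) (single 0 2 1) + 2 • wedge (single 0 1 1) (single 1 2 1)

theorem reindexAlgEquiv_classicalR :
    reindexAlgEquiv K K (Equiv.prodComm _ _) (classicalR : Matrix _ _ K) = -classicalR := by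
  simp only [classicalR, map_add, map_nsmul, reindexAlgEquiv_prodComm_wedge, neg_add, smul_neg]

theorem classicalR_mul_self :
    (classicalR : Matrix _ _ K) * classicalR = 2 • (single 0 2 1 ⊗ₖ single 0 2 1) := by
  simp only [classicalR, wedge, sub_kronecker, kronecker_sub, smul_sub, mul_add, add_mul, mul_sub,
    sub_mul, smul_mul_assoc, mul_smul_comm, ← mul_kronecker_mul]
  simp [single_mul_single_same, single_mul_single_of_ne, two_mul]

theorem kronecker_mul_classicalR :
    (single 0 2 1 ⊗ₖ single 0 2 1) * (classicalR : Matrix _ _ K) = 0 := by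
  simp only [classicalR, wedge, sub_kronecker, kronecker_sub, mul_add, mul_sub, mul_smul_comm,
    ← mul_kronecker_mul]
  simp [single_mul_single_same, single_mul_single_of_ne]

theorem classicalR_pow_three : (classicalR : Matrix _ _ K) ^ 3 = 0 := by
  rw [pow_three', classicalR_mul_self, smul_mul_assoc, kronecker_mul_classicalR, smul_zero]

theorem isNilpotent_classicalR : IsNilpotent (classicalR : Matrix _ _ K) :=
  ⟨3, classicalR_pow_three⟩

theorem exp_smul_classicalR [Algebra ℚ K] (t : K) :
    IsNilpotent.exp (t • classicalR : Matrix _ _ K)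
      = 1 + t • classicalR + t ^ 2 • (single 0 2 1 ⊗ₖ single 0 2 1) := by
  have h3 : (t • classicalR : Matrix _ _ K) ^ 3 = 0 := by
    rw [smul_pow, classicalR_pow_three, smul_zero]
  rw [IsNilpotent.exp_eq_sum h3]
  simp only [Finset.sum_range_succ, Finset.sum_range_zero, Nat.factorial_zero,
    Nat.factorial_one, Nat.factorial_two, Nat.cast_one, Nat.cast_ofNat, inv_one,
    one_smul, zero_add, pow_zero, pow_one, smul_pow, sq, classicalR_mul_self]
  rw [smul_comm, ← ofNat_smul_eq_nsmul ℚ 2, inv_smul_smul₀ two_ne_zero]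

theorem jordanianR_eq (t : K) :
    single 0 0 1 ⊗ₖ (1 + t • single 0 2 1) + single 1 1 1 ⊗ₖ (1 : Matrix (Fin 3) (Fin 3) K)
        + single 2 2 1 ⊗ₖ (1 - t • single 0 2 1)
        + single 0 1 1 ⊗ₖ ((2 * t) • single 1 2 1)
        + single 1 2 1 ⊗ₖ (-((2 * t) • single 0 1 1))
        + single 0 2 1 ⊗ₖ (-(t • (single 0 0 1 - single 2 2 1)) + (t ^ 2) • single 0 2 1)
      = 1 + t • classicalR + t ^ 2 • (single 0 2 1 ⊗ₖ single 0 2 1) := by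
  rw [← one_kronecker_one (m := Fin 3) (n := Fin 3) (α := K),
    ← sum_single_one (m := Fin 3) (α := K), Fin.sum_univ_three]
  simp only [classicalR, wedge, kronecker_add, add_kronecker, sub_kronecker, kronecker_sub,
    kronecker_smul, kronecker_neg, mul_smul]
  module

end Jordanian

open Jordanian in
theorem stmt_14 (h : ℂ)
    (T T' e₁ e₂ e₃ h₃ : Matrix (Fin 3) (Fin 3) ℂ)
    (he₁ : e₁ = Matrix.single 0 1 1)
    (he₂ : e₂ = Matrix.single 1 2 1)
    (he₃ : e₃ = Matrix.single 0 2 1)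
    (hh₃ : h₃ = Matrix.single 0 0 1 - Matrix.single 2 2 1)
    (hT : T = 1 + h • e₃) (hT' : T' = 1 - h • e₃)
    (R P : Matrix (Fin 3 × Fin 3) (Fin 3 × Fin 3) ℂ)
    (hR : R = Matrix.single 0 0 1 ⊗ₖ T + Matrix.single 1 1 1 ⊗ₖ (1 : Matrix (Fin 3) (Fin 3) ℂ)
        + Matrix.single 2 2 1 ⊗ₖ T'
        + Matrix.single 0 1 1 ⊗ₖ ((2 * h) • e₂)
        + Matrix.single 1 2 1 ⊗ₖ (-((2 * h) • e₁))
        + Matrix.single 0 2 1 ⊗ₖ (-(h • h₃) + (h ^ 2) • e₃))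
    (hP : P = Matrix.of fun p q : Fin 3 × Fin 3 =>
        if p.1 = q.2 ∧ p.2 = q.1 then (1 : ℂ) else 0) :
    (P * R * P) * R = 1 := by
  obtain rfl : P = flipMatrix (Fin 3) ℂ := hP
  subst he₁ he₂ he₃ hh₃ hT hT' hR
  have hnil : IsNilpotent (h • classicalR : Matrix (Fin 3 × Fin 3) (Fin 3 × Fin 3) ℂ) :=
    isNilpotent_classicalR.smul h
  rw [jordanianR_eq, ← exp_smul_classicalR, flipMatrix_mul_mul_flipMatrix,
    IsNilpotent.map_exp hnil, map_smul, reindexAlgEquiv_classicalR, smul_neg]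
  exact IsNilpotent.exp_neg_mul_exp_self hnil
end

section
/- Let A be an associative ℚ-algebra and let e, h ∈ A satisfy [h, e] = 2e. In A[[t]], define S = Σ_{n≥0} C(1/2, n) t^{2n} e^{2n}, T = t·e + S, and H = S·h. Then [H, T] = T² − 1. -/
/-!
Every series involved except `C h` is the image of a series over `ℚ` under the ring map
`f(X) ↦ f(X • e)`, so they all commute: `S = s(Xe)` with `s = √(1 + X²)` and `T = t(Xe)` with
`t = X + s`. Since `[h, eⁿ] = 2n eⁿ`, commuting with `h` acts on such images as `2 X d/dX`, so
`[H, T] = S [h, T]` is the image of `2 X s t'`. As `s² = 1 + X²` gives `s s' = X`, this equals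
`2Xs + 2X² = t² - 1`.
-/

theorem Ring.choose_eq_prod_range_div {K : Type*} [Field K] [CharZero K] (r : K) (n : ℕ) :
    Ring.choose r n = (∏ i ∈ Finset.range n, (r - i)) / n.factorial := by
  rw [Ring.choose_eq_smul, ← Polynomial.aeval_eq_smeval, ← Polynomial.eval_map_algebraMap,
    descPochhammer_map, descPochhammer_eval_eq_prod_range, smul_eq_mul, inv_mul_eq_div]

theorem mul_pow_sub_pow_mul_eq_smul {R A : Type*} [CommRing R] [Ring A] [Algebra R A]
    {h e : A} {a : R} (hhe : h * e - e * h = a • e) (n : ℕ) :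
    h * e ^ n - e ^ n * h = (n * a) • e ^ n := by
  induction n with
  | zero => simp
  | succ n ih =>
    calc h * e ^ (n + 1) - e ^ (n + 1) * h
        = (h * e ^ n - e ^ n * h) * e + e ^ n * (h * e - e * h) := by noncomm_ring
      _ = ((n + 1 : ℕ) * a) • e ^ (n + 1) := by
        rw [ih, hhe, smul_mul_assoc, mul_smul_comm, ← pow_succ, ← add_smul]
        push_cast
        ring_nf

namespace PowerSeries

section AlgRescale

variable {R A : Type*} [CommRing R] [Ring A] [Algebra R A]

/-- The substitution `X ↦ X * C e`, that is `∑ aₙ Xⁿ ↦ ∑ (aₙ • eⁿ) Xⁿ`. As `e` need not be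
central, it is obtained from `rescale` over the commutative ring `R[Y]` followed by `Y ↦ e`. -/
noncomputable def algRescale (e : A) : R⟦X⟧ →+* A⟦X⟧ :=
  (map (Polynomial.aeval e).toRingHom).comp ((rescale Polynomial.X).comp (map Polynomial.C))

theorem coeff_algRescale (e : A) (f : R⟦X⟧) (n : ℕ) :
    coeff n (algRescale e f) = coeff n f • e ^ n := by
  simp [algRescale, coeff_map, coeff_rescale, Algebra.smul_def, Algebra.commutes]

theorem algRescale_X (e : A) : algRescale e (X : R⟦X⟧) = X * C e := by
  ext n
  rw [coeff_algRescale, ← (commute_X (C e)).eq, coeff_C_mul, coeff_X]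
  split_ifs with hn <;> simp [hn, coeff_X]

theorem commute_algRescale (e : A) (f g : R⟦X⟧) :
    Commute (algRescale e f) (algRescale e g) :=
  (Commute.all f g).map _

theorem coeff_X_mul_derivative (f : R⟦X⟧) (n : ℕ) :
    coeff n (X * d⁄dX R f) = n * coeff n f := by
  cases n with
  | zero => simp
  | succ n =>
    rw [coeff_succ_X_mul, coeff_derivative, mul_comm]
    push_cast
    rfl

theorem C_mul_algRescale_sub_algRescale_mul_C {h e : A} {a : R} (hhe : h * e - e * h = a • e)
    (f : R⟦X⟧) :
    C h * algRescale e f - algRescale e f * C h = algRescale e (C a * (X * d⁄dX R f)) := by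
  ext n
  rw [map_sub, coeff_C_mul, coeff_mul_C, coeff_algRescale, coeff_algRescale, coeff_C_mul,
    coeff_X_mul_derivative, mul_smul_comm, smul_mul_assoc, ← smul_sub,
    mul_pow_sub_pow_mul_eq_smul hhe, smul_smul]
  ring_nf

end AlgRescale

theorem binomialSeries_half_sq (A : Type*) [Ring A] [Algebra ℚ A] :
    binomialSeries A (1 / 2 : ℚ) ^ 2 = 1 + X := by
  rw [sq, ← binomialSeries_add, add_halves]
  simpa using binomialSeries_nat (R := ℚ) (A := A) 1

theorem mul_X_mul_derivative_X_add_of_sq_eq {R : Type*} [CommRing R] {s : R⟦X⟧}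
    (hs : s ^ 2 = 1 + X ^ 2) :
    s * (2 * (X * d⁄dX R (X + s))) = (X + s) * (X + s) - 1 := by
  have hss' : 2 * (s * d⁄dX R s) = 2 * X := by
    have := congrArg (d⁄dX R) hs
    simp only [Derivation.leibniz_pow, map_add, Derivation.map_one_eq_zero, derivative_X,
      smul_eq_mul, nsmul_eq_mul] at this
    linear_combination this
  rw [map_add, derivative_X]
  linear_combination X * hss' - hs

end PowerSeries

open PowerSeries

theorem stmt_17 {A : Type*} [Ring A] [Algebra ℚ A] (e h : A)
    (hcomm : h * e - e * h = 2 * e)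
    (c : ℕ → ℚ)
    (hc : ∀ n, c n = (∏ i ∈ Finset.range n, ((1 : ℚ) / 2 - i)) / n.factorial)
    (S T H : PowerSeries A)
    (hS : S = PowerSeries.mk fun m => if m % 2 = 0 then c (m / 2) • e ^ m else 0)
    (hT : T = PowerSeries.X * PowerSeries.C e + S)
    (hH : H = S * PowerSeries.C h) :
    H * T - T * H = T * T - 1 := by
  set s : ℚ⟦X⟧ := expand 2 two_ne_zero (binomialSeries ℚ (1 / 2 : ℚ))
  have hs : s ^ 2 = 1 + X ^ 2 := by
    rw [← map_pow, binomialSeries_half_sq, map_add, map_one, expand_X]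
  have hSs : S = algRescale e s := by
    ext m
    rw [hS, coeff_mk, coeff_algRescale, coeff_expand, binomialSeries_coeff, smul_eq_mul, mul_one]
    simp only [Nat.dvd_iff_mod_eq_zero]
    split_ifs <;> simp [hc, Ring.choose_eq_prod_range_div]
  have hTs : T = algRescale e (X + s) := by rw [hT, map_add, algRescale_X, hSs]
  have hhe : h * e - e * h = (2 : ℚ) • e := by rw [hcomm, two_smul, two_mul]
  calc H * T - T * H = S * (C h * T - T * C h) := by
        rw [hH, mul_sub, ← mul_assoc T, hSs, hTs, (commute_algRescale e (X + s) s).eq]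
        simp only [mul_assoc]
    _ = algRescale e (s * (C (2 : ℚ) * (X * d⁄dX ℚ (X + s)))) := by
        rw [hTs, hSs, C_mul_algRescale_sub_algRescale_mul_C hhe, ← map_mul]
    _ = T * T - 1 := by
        rw [map_ofNat C 2, mul_X_mul_derivative_X_add_of_sq_eq hs, map_sub, map_mul, map_one, hTs]
end
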